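/- Let α ∈ (1,2). There exists a constant C₅ = C₅(α) such that for all t > 0, ∫_0^{t/2} ∫_{t/2}^t (r−u)^{-2/α} · ((t−r)^{1/α−1} + (r−u)^{1/α−1}) · ((t−u)^{1/α−1} + u^{1/α−1}) dr du ≤ C₅. -/

import Mathlib

/-!
Put β = 1/α ∈ (0, 1) and s = t/2, and split r - u = (r - s) + (s - u). As r - u dominates both
pieces, (r - u)^(-2β) ≤ (r - s)^(-β) (s - u)^(-β) and (r - u)^(-(1+β)) ≤ (r - s)^(-w) (s - u)^(-w)
with w = (1 + β)/2 < 1, while (t - u)^(β-1) ≤ u^(β-1). So the integrand is dominated by twice a sum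
of two products f(u) g(r) of Beta-type kernels x^p (ℓ - x)^q with p, q ∈ (-1, 0]. Each such kernel
integrates over an interval of length ℓ to at most a constant times ℓ^(p+q+1), and in each product
the powers of t cancel, reflecting that the double integral is invariant under rescaling t.
-/

open MeasureTheory Real Set
open scoped ENNReal

section IntervalPowers

variable {a b p : ℝ}

theorem setLIntegral_Ioc_ofReal_eq_intervalIntegral {f : ℝ → ℝ} (hab : a ≤ b)
    (hf : IntervalIntegrable f volume a b) (hf₀ : ∀ x ∈ Ioc a b, 0 ≤ f x) :
    ∫⁻ x in Ioc a b, ENNReal.ofReal (f x) = ENNReal.ofReal (∫ x in a..b, f x) := by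
  rw [intervalIntegral.integral_of_le hab, ofReal_integral_eq_lintegral_ofReal hf.1
    ((ae_restrict_iff' measurableSet_Ioc).2 (ae_of_all _ hf₀))]

theorem setLIntegral_Ioc_ofReal_rpow_sub_right (hab : a ≤ b) (hp : -1 < p) :
    ∫⁻ x in Ioc a b, ENNReal.ofReal ((x - a) ^ p) =
      ENNReal.ofReal ((b - a) ^ (p + 1) / (p + 1)) := by
  have hf : IntervalIntegrable (fun x ↦ (x - a) ^ p) volume a b := by
    simpa using
      (intervalIntegral.intervalIntegrable_rpow' (a := 0) (b := b - a) hp).comp_sub_right a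
  rw [setLIntegral_Ioc_ofReal_eq_intervalIntegral hab hf
      fun x hx ↦ rpow_nonneg (by linarith [hx.1]) _,
    intervalIntegral.integral_comp_sub_right (· ^ p), sub_self, integral_rpow (Or.inl hp),
    zero_rpow (by linarith), sub_zero]

theorem setLIntegral_Ioc_ofReal_rpow_sub_left (hab : a ≤ b) (hp : -1 < p) :
    ∫⁻ x in Ioc a b, ENNReal.ofReal ((b - x) ^ p) =
      ENNReal.ofReal ((b - a) ^ (p + 1) / (p + 1)) := by
  have hf : IntervalIntegrable (fun x ↦ (b - x) ^ p) volume a b := by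
    simpa using
      ((intervalIntegral.intervalIntegrable_rpow' (a := 0) (b := b - a) hp).comp_sub_left b).symm
  rw [setLIntegral_Ioc_ofReal_eq_intervalIntegral hab hf
      fun x hx ↦ rpow_nonneg (by linarith [hx.2]) _,
    intervalIntegral.integral_comp_sub_left (· ^ p), sub_self, integral_rpow (Or.inl hp),
    zero_rpow (by linarith), sub_zero]

end IntervalPowers

theorem add_rpow_neg_add_le {x y p q : ℝ} (hx : 0 < x) (hy : 0 < y) (hp : 0 ≤ p) (hq : 0 ≤ q) :
    (x + y) ^ (-(p + q)) ≤ x ^ (-p) * y ^ (-q) := by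
  rw [neg_add, rpow_add (by positivity)]
  exact mul_le_mul (rpow_le_rpow_of_nonpos hx (by linarith) (by linarith))
    (rpow_le_rpow_of_nonpos hy (by linarith) (by linarith)) (by positivity) (by positivity)

theorem setLIntegral_Ioo_ofReal_rpow_mul_rpow_le {a b p q : ℝ} (hab : a < b)
    (hp : p ∈ Ioc (-1) 0) (hq : q ∈ Ioc (-1) 0) :
    ∫⁻ x in Ioo a b, ENNReal.ofReal ((x - a) ^ p * (b - x) ^ q) ≤
      ENNReal.ofReal (((b - a) / 2) ^ (p + q + 1) * (1 / (p + 1) + 1 / (q + 1))) := by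
  obtain ⟨hp₁, hp₀⟩ := hp
  obtain ⟨hq₁, hq₀⟩ := hq
  have hp₁' : 0 < p + 1 := by linarith
  have hq₁' : 0 < q + 1 := by linarith
  set δ := (b - a) / 2
  have hδ : 0 < δ := by positivity
  set m := (a + b) / 2
  have hma : m - a = δ := by ring
  have hbm : b - m = δ := by ring
  have left : ∫⁻ x in Ioc a m, ENNReal.ofReal ((x - a) ^ p * (b - x) ^ q) ≤
      ENNReal.ofReal (δ ^ (p + q + 1) / (p + 1)) := calc
    _ ≤ ∫⁻ x in Ioc a m, ENNReal.ofReal ((x - a) ^ p) * ENNReal.ofReal (δ ^ q) := by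
      refine setLIntegral_mono' measurableSet_Ioc fun x hx ↦ ?_
      rw [← ENNReal.ofReal_mul (rpow_nonneg (by linarith [hx.1] : 0 ≤ x - a) _)]
      exact ENNReal.ofReal_le_ofReal <| mul_le_mul_of_nonneg_left
        (rpow_le_rpow_of_nonpos hδ (by linarith [hx.2] : δ ≤ b - x) hq₀)
        (rpow_nonneg (by linarith [hx.1] : 0 ≤ x - a) _)
    _ = ENNReal.ofReal (δ ^ (p + q + 1) / (p + 1)) := by
      rw [lintegral_mul_const' _ _ ENNReal.ofReal_ne_top,
        setLIntegral_Ioc_ofReal_rpow_sub_right (by linarith) hp₁, hma,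
        ← ENNReal.ofReal_mul (by positivity), div_mul_eq_mul_div, ← rpow_add hδ, add_right_comm]
  have right : ∫⁻ x in Ioo m b, ENNReal.ofReal ((x - a) ^ p * (b - x) ^ q) ≤
      ENNReal.ofReal (δ ^ (p + q + 1) / (q + 1)) := calc
    _ ≤ ∫⁻ x in Ioc m b, ENNReal.ofReal (δ ^ p) * ENNReal.ofReal ((b - x) ^ q) := by
      rw [restrict_Ioo_eq_restrict_Ioc]
      refine setLIntegral_mono' measurableSet_Ioc fun x hx ↦ ?_
      rw [← ENNReal.ofReal_mul (by positivity)]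
      exact ENNReal.ofReal_le_ofReal <| mul_le_mul_of_nonneg_right
        (rpow_le_rpow_of_nonpos hδ (by linarith [hx.1] : δ ≤ x - a) hp₀)
        (rpow_nonneg (by linarith [hx.2] : 0 ≤ b - x) _)
    _ = ENNReal.ofReal (δ ^ (p + q + 1) / (q + 1)) := by
      rw [lintegral_const_mul' _ _ ENNReal.ofReal_ne_top,
        setLIntegral_Ioc_ofReal_rpow_sub_left (by linarith) hq₁, hbm,
        ← ENNReal.ofReal_mul (by positivity), mul_div_assoc', ← rpow_add hδ, add_assoc]
  rw [← Ioc_union_Ioo_eq_Ioo (by linarith : a ≤ m) (by linarith : m < b)]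
  calc _ ≤ _ := (lintegral_union_le _ _ _).trans (add_le_add left right)
    _ = _ := by
      rw [← ENNReal.ofReal_add (by positivity) (by positivity)]
      congr 1
      ring

theorem setLIntegral_setLIntegral_le_of_le_mul_add_mul {X Y : Type*} [MeasurableSpace X]
    [MeasurableSpace Y] {μ : Measure X} {ν : Measure Y} {S : Set X} {T : Set Y}
    {F : X → Y → ℝ≥0∞} {f₁ f₂ : X → ℝ≥0∞} {g₁ g₂ : Y → ℝ≥0∞} {c : ℝ≥0∞}
    (hf₁ : Measurable f₁) (hf₂ : Measurable f₂) (hg₁ : Measurable g₁) (hg₂ : Measurable g₂)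
    (h : ∀ x ∈ S, ∀ y ∈ T, F x y ≤ c * (f₁ x * g₁ y + f₂ x * g₂ y)) :
    ∫⁻ x in S, ∫⁻ y in T, F x y ∂ν ∂μ ≤
      c * ((∫⁻ x in S, f₁ x ∂μ) * (∫⁻ y in T, g₁ y ∂ν) +
        (∫⁻ x in S, f₂ x ∂μ) * (∫⁻ y in T, g₂ y ∂ν)) := by
  set G₁ := ∫⁻ y in T, g₁ y ∂ν
  set G₂ := ∫⁻ y in T, g₂ y ∂ν
  have inner : ∀ x ∈ S, ∫⁻ y in T, F x y ∂ν ≤ c * (f₁ x * G₁ + f₂ x * G₂) := fun x hx ↦ calc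
    _ ≤ ∫⁻ y in T, c * (f₁ x * g₁ y + f₂ x * g₂ y) ∂ν := setLIntegral_mono (by fun_prop) (h x hx)
    _ = c * (f₁ x * G₁ + f₂ x * G₂) := by
      rw [lintegral_const_mul _ (by fun_prop), lintegral_add_left (by fun_prop),
        lintegral_const_mul _ hg₁, lintegral_const_mul _ hg₂]
  calc _ ≤ ∫⁻ x in S, c * (f₁ x * G₁ + f₂ x * G₂) ∂μ := setLIntegral_mono (by fun_prop) inner
    _ = _ := by
      rw [lintegral_const_mul _ (by fun_prop), lintegral_add_left (by fun_prop),
        lintegral_mul_const _ hf₁, lintegral_mul_const _ hf₂]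

theorem setLIntegral_halves_mul_le {t p₁ q₁ p₂ q₂ : ℝ} (ht : 0 < t)
    (hp₁ : p₁ ∈ Ioc (-1) 0) (hq₁ : q₁ ∈ Ioc (-1) 0) (hp₂ : p₂ ∈ Ioc (-1) 0)
    (hq₂ : q₂ ∈ Ioc (-1) 0) (hpq : p₁ + q₁ + 1 + (p₂ + q₂ + 1) = 0) :
    (∫⁻ u in Ioo 0 (t / 2), ENNReal.ofReal (u ^ p₁ * (t / 2 - u) ^ q₁)) *
        ∫⁻ r in Ioo (t / 2) t, ENNReal.ofReal ((r - t / 2) ^ p₂ * (t - r) ^ q₂) ≤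
      ENNReal.ofReal ((1 / (p₁ + 1) + 1 / (q₁ + 1)) * (1 / (p₂ + 1) + 1 / (q₂ + 1))) := by
  have left := setLIntegral_Ioo_ofReal_rpow_mul_rpow_le (half_pos ht) hp₁ hq₁
  have right := setLIntegral_Ioo_ofReal_rpow_mul_rpow_le (half_lt_self ht) hp₂ hq₂
  rw [sub_half] at right
  simp only [sub_zero] at left
  have : 0 < p₁ + 1 := by linarith [hp₁.1]
  have : 0 < q₁ + 1 := by linarith [hq₁.1]
  refine (mul_le_mul' left right).trans_eq ?_
  rw [← ENNReal.ofReal_mul (by positivity), mul_mul_mul_comm, ← rpow_add (by positivity), hpq,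
    rpow_zero, one_mul]

-- The factor `(t - r) ^ 0` gives the second product the same Beta shape as the first.
theorem integrand_le_sum_of_products {β u s r t : ℝ} (hβ₀ : 0 ≤ β) (hβ₁ : β ≤ 1) (hu : 0 < u)
    (hus : u < s) (hsr : s < r) (hrt : r < t) (hut : u ≤ t - u) :
    (r - u) ^ (-(2 * β)) * ((t - r) ^ (β - 1) + (r - u) ^ (β - 1)) *
        ((t - u) ^ (β - 1) + u ^ (β - 1)) ≤
      2 * (u ^ (β - 1) * (s - u) ^ (-β) * ((r - s) ^ (-β) * (t - r) ^ (β - 1)) +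
        u ^ (β - 1) * (s - u) ^ (-((β + 1) / 2)) *
          ((r - s) ^ (-((β + 1) / 2)) * (t - r) ^ (0 : ℝ))) := by
  set w := (β + 1) / 2
  have hrs : 0 < r - s := by linarith
  have hsu : 0 < s - u := by linarith
  have hru : r - u = (r - s) + (s - u) := by ring
  have hH : (t - u) ^ (β - 1) + u ^ (β - 1) ≤ 2 * u ^ (β - 1) := by
    linarith [rpow_le_rpow_of_nonpos hu hut (by linarith : β - 1 ≤ 0)]
  have h₁ : (r - u) ^ (-(2 * β)) ≤ (r - s) ^ (-β) * (s - u) ^ (-β) := by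
    rw [hru, two_mul]
    exact add_rpow_neg_add_le hrs hsu hβ₀ hβ₀
  have h₂ : (r - u) ^ (-(2 * β)) * (r - u) ^ (β - 1) ≤ (r - s) ^ (-w) * (s - u) ^ (-w) := by
    rw [← rpow_add (by linarith), show -(2 * β) + (β - 1) = -(w + w) by ring, hru]
    exact add_rpow_neg_add_le hrs hsu (by positivity) (by positivity)
  calc _ = ((r - u) ^ (-(2 * β)) * (t - r) ^ (β - 1) + (r - u) ^ (-(2 * β)) * (r - u) ^ (β - 1)) *
        ((t - u) ^ (β - 1) + u ^ (β - 1)) := by ring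
    _ ≤ ((r - s) ^ (-β) * (s - u) ^ (-β) * (t - r) ^ (β - 1) + (r - s) ^ (-w) * (s - u) ^ (-w)) *
        (2 * u ^ (β - 1)) := by
      have : 0 < t - r := by linarith
      have : 0 < t - u := by linarith
      gcongr
    _ = _ := by rw [rpow_zero]; ring

theorem stmt9 (α : ℝ) (hα : α ∈ Set.Ioo (1 : ℝ) 2) :
    ∃ C : ℝ, 0 < C ∧ ∀ t : ℝ, 0 < t →
      ∫⁻ u in Set.Ioo (0 : ℝ) (t / 2), ∫⁻ r in Set.Ioo (t / 2) t,
          ENNReal.ofReal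
            ((r - u) ^ (-2 / α) *
              ((t - r) ^ (1 / α - 1) + (r - u) ^ (1 / α - 1)) *
              ((t - u) ^ (1 / α - 1) + u ^ (1 / α - 1))) ≤
        ENNReal.ofReal C := by
  set β := 1 / α with hβ
  have hβ₀ : 0 < β := one_div_pos.2 (by linarith [hα.1])
  have hβ₁ : β < 1 := by rw [hβ, div_lt_one (by linarith [hα.1])]; exact hα.1
  set w := (β + 1) / 2 with hw
  have : 0 < 1 - β := by linarith
  have : 0 < 1 - w := by linarith
  have hw' : -w ∈ Ioc (-1) 0 := ⟨by linarith, by linarith⟩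
  have hβ₁' : β - 1 ∈ Ioc (-1) 0 := ⟨by linarith, by linarith⟩
  have hβ₀' : -β ∈ Ioc (-1) 0 := ⟨by linarith, by linarith⟩
  refine ⟨2 * ((1 / β + 1 / (1 - β)) * (1 / (1 - β) + 1 / β) +
    (1 / β + 1 / (1 - w)) * (1 / (1 - w) + 1)), by positivity, fun t ht ↦ ?_⟩
  rw [show -2 / α = -(2 * β) by rw [hβ]; ring]
  have pointwise : ∀ u ∈ Ioo 0 (t / 2), ∀ r ∈ Ioo (t / 2) t,
      ENNReal.ofReal ((r - u) ^ (-(2 * β)) * ((t - r) ^ (β - 1) + (r - u) ^ (β - 1)) *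
        ((t - u) ^ (β - 1) + u ^ (β - 1))) ≤
      2 * (ENNReal.ofReal (u ^ (β - 1) * (t / 2 - u) ^ (-β)) *
          ENNReal.ofReal ((r - t / 2) ^ (-β) * (t - r) ^ (β - 1)) +
        ENNReal.ofReal (u ^ (β - 1) * (t / 2 - u) ^ (-w)) *
          ENNReal.ofReal ((r - t / 2) ^ (-w) * (t - r) ^ (0 : ℝ))) := by
    rintro u ⟨hu, hus⟩ r ⟨hsr, hrt⟩
    have : 0 < t / 2 - u := by linarith
    have : 0 < r - t / 2 := by linarith
    have : 0 < t - r := by linarith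
    refine (ENNReal.ofReal_le_ofReal (integrand_le_sum_of_products hβ₀.le hβ₁.le hu hus hsr hrt
      (by linarith))).trans_eq ?_
    rw [← ENNReal.ofReal_mul (by positivity), ← ENNReal.ofReal_mul (by positivity),
      ← ENNReal.ofReal_add (by positivity) (by positivity), ← ENNReal.ofReal_ofNat 2,
      ← ENNReal.ofReal_mul zero_le_two]
  refine (setLIntegral_setLIntegral_le_of_le_mul_add_mul (by fun_prop) (by fun_prop)
    (by fun_prop) (by fun_prop) pointwise).trans ?_
  rw [ENNReal.ofReal_mul zero_le_two, ENNReal.ofReal_ofNat, ENNReal.ofReal_add (by positivity)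
    (by positivity)]
  gcongr
  · exact (setLIntegral_halves_mul_le ht hβ₁' hβ₀' hβ₀' hβ₁' (by ring)).trans_eq (by ring_nf)
  · exact (setLIntegral_halves_mul_le ht hβ₁' hw' hw' ⟨by norm_num, le_rfl⟩ (by ring)).trans_eq
      (by ring_nf)
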